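/- arXiv:2310.08498 — 2 statements merged into one kernel-verified Lean document; each statement's English description precedes it below -/
import Mathlib

section
/- For the pyramidal truss with φ = 0 (rotation axis t = e₁), the rotation R about e₁ mapping AB→ to DC→ has rotation angle α satisfying tan(α/2) = (c − c*)/s*. -/
open Real

/-- Rotation of angle `α` about the axis `e₁ = (1,0,0)` in `ℝ³`. -/
noncomputable def rotX (α : ℝ) (v : Fin 3 → ℝ) : Fin 3 → ℝ :=
  ![v 0, Real.cos α * v 1 - Real.sin α * v 2, Real.sin α * v 1 + Real.cos α * v 2]

theorem stmt_6 (r θ θs α : ℝ) (hr : 0 < r)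
    (s c ss cs : ℝ)
    (hs : s = sin (θ / 2)) (hc : c = cos (θ / 2))
    (hss : ss = sin (θs / 2)) (hcs : cs = cos (θs / 2))
    (hspos : 0 < s) (hcpos : 0 < c) (hsspos : 0 < ss) (hcspos : 0 < cs)
    (hcon : 2 * c * cs = 1)
    (A B C D : Fin 3 → ℝ)
    (hA : A = ![0, -(r * ss), -(r * cs)])
    (hB : B = ![r * s, 0, -(r * c)])
    (hC : C = ![0, r * ss, -(r * cs)])
    (hD : D = ![-(r * s), 0, -(r * c)])
    (hα : α ∈ Set.Ioo (-π) π)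
    (hrot : rotX α (B - A) = C - D) :
    tan (α / 2) = (c - cs) / ss := by
  have h2 := congrFun hrot 2
  subst hA hB hC hD
  simp [rotX, Pi.sub_apply] at h2
  -- h2 : sin α * (r * ss) + cos α * (-(r*c) - -(r*cs)) = -(r*cs) - -(r*c)  (some form)
  have hsin : Real.sin α = 2 * Real.sin (α/2) * Real.cos (α/2) := by
    rw [← Real.sin_two_mul]; ring_nf
  have hcos : Real.cos α = 2 * Real.cos (α/2)^2 - 1 := by
    have := Real.cos_two_mul (α/2)
    have h' : 2 * (α/2) = α := by ring
    rw [h'] at this; linarith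
  have hchalf : 0 < Real.cos (α/2) := by
    apply Real.cos_pos_of_mem_Ioo
    constructor <;> [linarith [hα.1]; linarith [hα.2]]
  have key : Real.sin (α/2) * ss = Real.cos (α/2) * (c - cs) := by
    have hr' : r ≠ 0 := ne_of_gt hr
    have h3 : Real.sin α * ss + Real.cos α * (cs - c) = c - cs := by
      have := h2
      field_simp at this ⊢
      nlinarith [this]
    rw [hsin, hcos] at h3
    have hc2 : Real.cos (α/2) ≠ 0 := ne_of_gt hchalf
    have : Real.cos (α/2) * (Real.sin (α/2) * ss - Real.cos (α/2) * (c - cs)) = 0 := by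
      nlinarith [h3]
    rcases mul_eq_zero.mp this with h | h
    · exact absurd h hc2
    · linarith
  rw [Real.tan_eq_sin_div_cos]
  rw [div_eq_div_iff (ne_of_gt hchalf) (ne_of_gt hsspos)]
  linarith [key]
end

section
/- Let ω̂ solve ω̂'' + sin ω̂ = 0 with −1 < I < 1, and let T be its period. Define z(ξ) = z₀ + ∫₀^ξ cos ω̂(s) ds. Then z(ξ + T) − z(ξ) = ∫₀ᵀ cos ω̂(s) ds is independent of ξ, and this quantity is strictly positive (using cos ω̂ = (1/2)ω̂'² − I ≥ −I > −1 and the energy relation, one gets ∫₀ᵀ cos ω̂ = ∫₀ᵀ ((1/2)ω̂'² − I) ds = (1/2)∫₀ᵀ ω̂'² − IT, which is > 0 when I ≤ 0). -/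
open Real

theorem stmt_19 (ω : ℝ → ℝ) (hω : ContDiff ℝ 2 ω)
    (heq : ∀ ξ, deriv (deriv ω) ξ + sin (ω ξ) = 0)
    (I : ℝ) (hI : ∀ ξ, (1 / 2) * (deriv ω ξ) ^ 2 - cos (ω ξ) = I)
    (hI1 : -1 < I) (hI0 : I ≤ 0)
    (T : ℝ) (hT : 0 < T) (hper : ∀ ξ, ω (ξ + T) = ω ξ) (z₀ : ℝ) :
    (∀ ξ, (z₀ + ∫ s in (0 : ℝ)..(ξ + T), cos (ω s)) -
        (z₀ + ∫ s in (0 : ℝ)..ξ, cos (ω s)) =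
      ∫ s in (0 : ℝ)..T, cos (ω s)) ∧
    0 < ∫ s in (0 : ℝ)..T, cos (ω s) := by
  have hc : Continuous fun s => cos (ω s) := Real.continuous_cos.comp hω.continuous
  have hint : ∀ a b : ℝ, IntervalIntegrable (fun s => cos (ω s)) MeasureTheory.volume a b :=
    fun a b => hc.intervalIntegrable a b
  have hp : Function.Periodic (fun s => cos (ω s)) T := fun x => by simp [hper x]
  have hnn : ∀ s, 0 ≤ cos (ω s) := by
    intro s
    have h := hI s
    nlinarith [sq_nonneg (deriv ω s)]
  constructor
  · intro ξ
    have hsplit := intervalIntegral.integral_add_adjacent_intervals (hint 0 ξ) (hint ξ (ξ + T))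
    have hper' := hp.intervalIntegral_add_eq ξ 0
    simp only [zero_add] at hper'
    linarith [hsplit, hper']
  · -- positivity
    have hnonneg : 0 ≤ ∫ s in (0:ℝ)..T, cos (ω s) :=
      intervalIntegral.integral_nonneg hT.le fun x _ => hnn x
    rcases hnonneg.lt_or_eq with h | h
    · exact h
    · exfalso
      have hae : (fun s => cos (ω s)) =ᵐ[MeasureTheory.volume.restrict (Set.Ioc 0 T)] 0 := by
        rw [← intervalIntegral.integral_eq_zero_iff_of_le_of_nonneg_ae hT.le
          (Filter.Eventually.of_forall fun x => hnn x) (hint 0 T)]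
        exact h.symm
      have hEq : Set.EqOn (fun s => cos (ω s)) 0 (Set.Ioc 0 T) :=
        MeasureTheory.Measure.eqOn_Ioc_of_ae_eq MeasureTheory.volume hae
          hc.continuousOn continuous_const.continuousOn
      -- deriv ω vanishes on Ioo 0 T
      have hderiv0 : ∀ s ∈ Set.Ioo (0:ℝ) T, deriv ω s = 0 := by
        intro s hs
        have hcz : cos (ω s) = 0 := hEq (Set.Ioo_subset_Ioc_self hs)
        have h1 := hI s
        nlinarith [sq_nonneg (deriv ω s)]
      set m : ℝ := T / 2 with hm
      have hmem : m ∈ Set.Ioo (0:ℝ) T := ⟨by linarith, by linarith⟩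
      have hnbhd : Set.Ioo (0:ℝ) T ∈ nhds m := isOpen_Ioo.mem_nhds hmem
      have hev : deriv ω =ᶠ[nhds m] fun _ => (0:ℝ) :=
        Filter.eventuallyEq_of_mem hnbhd fun x hx => hderiv0 x hx
      have hdd : deriv (deriv ω) m = 0 := by
        rw [hev.deriv_eq]; exact deriv_const m 0
      have hsin : sin (ω m) = 0 := by have := heq m; linarith
      have hcos : cos (ω m) = 0 := hEq (Set.Ioo_subset_Ioc_self hmem)
      have := sin_sq_add_cos_sq (ω m)
      rw [hsin, hcos] at this
      norm_num at this
end
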